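/- Let p be a prime and assume λ is multiplicative and r(p) > 0. Then: (i) ξ_1(1) = 1; (ii) ξ_p(p) = r(p)^{-1/2}; (iii) ξ_p(1) = (−λ(p)/(√p·(1 + χ(p)/p))) · ξ_p(p); and for every integer ν ≥ 2: (iv) ξ_{p^ν}(p^ν) = ( r(p)·(1 − χ(p)/p²) )^{-1/2}; (v) ξ_{p^ν}(p^{ν−1}) = (−λ(p)/√p) · ξ_{p^ν}(p^ν); (vi) ξ_{p^ν}(p^{ν−2}) = (χ(p)/p) · ξ_{p^ν}(p^ν). -/

import Mathlib

open scoped BigOperators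
open Finset

noncomputable section

/-- A multiplicative arithmetic function: `λ(1) = 1` and
`λ(ab) = λ(a)λ(b)` whenever `gcd(a,b) = 1`. -/
def IsMult (lam : ℕ → ℝ) : Prop :=
  lam 1 = 1 ∧ ∀ a b : ℕ, Nat.Coprime a b → lam (a * b) = lam a * lam b

/-- The trivial character mod `M`: `χ(n) = 1` if `gcd(n,M) = 1`, else `0`. -/
def chi (M n : ℕ) : ℝ := if Nat.gcd n M = 1 then 1 else 0

/-- `σ(b) = Σ_{r | b} χ(r)/r` (twisted divisor sum). -/
def sigTw (M b : ℕ) : ℝ := ∑ r ∈ b.divisors, chi M r / r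

/-- `r(c) = Σ_{b | c} μ(b)λ(b)² / (b σ(b)²)`. -/
def rF (M : ℕ) (lam : ℕ → ℝ) (c : ℕ) : ℝ :=
  ∑ b ∈ c.divisors,
    (ArithmeticFunction.moebius b : ℝ) * (lam b) ^ 2 / (b * (sigTw M b) ^ 2)

/-- `α(c) = Σ_{b | c} χ(b)μ(b)/b²`. -/
def alphaF (M c : ℕ) : ℝ :=
  ∑ b ∈ c.divisors, chi M b * (ArithmeticFunction.moebius b : ℝ) / (b : ℝ) ^ 2

/-- `β(c) = Σ_{b | c} χ(b)μ(b)²/b`. -/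
def betaF (M c : ℕ) : ℝ :=
  ∑ b ∈ c.divisors, chi M b * (ArithmeticFunction.moebius b : ℝ) ^ 2 / b

/-- The multiplicative function `μ_λ` determined by `μ_λ(p) = -λ(p)`,
`μ_λ(p²) = χ(p)`, `μ_λ(p^j) = 0` for `j ≥ 3`. -/
def muLam (M : ℕ) (lam : ℕ → ℝ) (d : ℕ) : ℝ :=
  ∏ p ∈ d.primeFactors,
    (if d.factorization p = 1 then -lam p
     else if d.factorization p = 2 then chi M p else 0)

/-- The squarefree part `d₁` of `d`. -/
def sfPart (d : ℕ) : ℕ :=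
  ∏ p ∈ d.primeFactors, if d.factorization p = 1 then p else 1

/-- The squarefull part `d₂` of `d`. -/
def ffPart (d : ℕ) : ℕ :=
  ∏ p ∈ d.primeFactors, if d.factorization p = 1 then 1 else p ^ d.factorization p

/-- `ξ'_{d₁}(g) = μ(d₁/g)λ(d₁/g) / (r(d₁)^{1/2} (d₁/g)^{1/2} β(d₁/g))` for `g ∣ d₁`. -/
def xi' (M : ℕ) (lam : ℕ → ℝ) (d₁ g : ℕ) : ℝ :=
  (ArithmeticFunction.moebius (d₁ / g) : ℝ) * lam (d₁ / g) /
    (Real.sqrt (rF M lam d₁) * Real.sqrt ((d₁ / g : ℕ) : ℝ) * betaF M (d₁ / g))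

/-- `ξ''_{d₂}(g) = μ_λ(d₂/g) / ((d₂/g)^{1/2} (r(d₂)α(d₂))^{1/2})` for `g ∣ d₂`. -/
def xi'' (M : ℕ) (lam : ℕ → ℝ) (d₂ g : ℕ) : ℝ :=
  muLam M lam (d₂ / g) /
    (Real.sqrt ((d₂ / g : ℕ) : ℝ) * Real.sqrt (rF M lam d₂ * alphaF M d₂))

/-- `ξ_d(ℓ) = ξ'_{d₁}(gcd(d₁,ℓ)) ξ''_{d₂}(gcd(d₂,ℓ))`. -/
def xi (M : ℕ) (lam : ℕ → ℝ) (d ℓ : ℕ) : ℝ :=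
  xi' M lam (sfPart d) (Nat.gcd (sfPart d) ℓ) *
    xi'' M lam (ffPart d) (Nat.gcd (ffPart d) ℓ)

/-! A prime power is either squarefree (`p = p · 1`) or squarefull (`p^ν = 1 · p^ν` for
`ν ≥ 2`), so `ξ` collapses to a single factor `ξ'` or `ξ''`. Since `μ` vanishes on `p^i` for
`i ≥ 2`, the divisor sums `r` and `α` over `p^ν` only see the divisors `1` and `p`; hence
`r(p^ν) = r(p)` and `α(p^ν) = 1 - χ(p)/p²`, and the six values are read off. -/

open ArithmeticFunction
open scoped ArithmeticFunction.Moebius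

section PrimePowerValues

variable (M : ℕ) (lam : ℕ → ℝ) {p : ℕ}

lemma chi_one : chi M 1 = 1 := by simp [chi]

lemma sigTw_one : sigTw M 1 = 1 := by simp [sigTw, chi_one]

lemma alphaF_one : alphaF M 1 = 1 := by simp [alphaF, chi_one]

lemma betaF_one : betaF M 1 = 1 := by simp [betaF, chi_one]

lemma betaF_prime (hp : p.Prime) : betaF M p = 1 + chi M p / p := by
  rw [betaF, hp.divisors, sum_insert (by simp [hp.ne_one.symm]), sum_singleton,
    moebius_apply_prime hp]
  simp [chi_one]

lemma muLam_one : muLam M lam 1 = 1 := by simp [muLam]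

lemma muLam_prime (hp : p.Prime) : muLam M lam p = -lam p := by
  simp [muLam, hp.primeFactors, hp.factorization_self]

lemma muLam_prime_sq (hp : p.Prime) : muLam M lam (p ^ 2) = chi M p := by
  simp [muLam, Nat.primeFactors_prime_pow two_ne_zero hp, hp.factorization_pow]

lemma sum_divisors_prime_pow_of_eq_zero (hp : p.Prime) {ν : ℕ} (hν : 1 ≤ ν) (g : ℕ → ℝ)
    (hg : ∀ i, 2 ≤ i → g (p ^ i) = 0) :
    ∑ b ∈ (p ^ ν).divisors, g b = g 1 + g p := by
  rw [Nat.sum_divisors_prime_pow hp, ← sum_subset (range_subset_range.2 (by omega : 2 ≤ ν + 1))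
    (fun i _ hi ↦ hg i (by simp at hi; omega))]
  simp [sum_range_succ]

lemma moebius_prime_pow_eq_zero (hp : p.Prime) {i : ℕ} (hi : 2 ≤ i) :
    (μ (p ^ i) : ℝ) = 0 := by
  rw [moebius_apply_prime_pow hp (by omega), if_neg (by omega), Int.cast_zero]

lemma rF_prime_pow (hp : p.Prime) {ν : ℕ} (hν : 1 ≤ ν) : rF M lam (p ^ ν) = rF M lam p := by
  have key (n : ℕ) (hn : 1 ≤ n) := sum_divisors_prime_pow_of_eq_zero hp hn
    (fun b ↦ (μ b : ℝ) * lam b ^ 2 / (b * sigTw M b ^ 2))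
    (fun i hi ↦ by simp only [moebius_prime_pow_eq_zero hp hi, zero_mul, zero_div])
  rw [rF, rF]
  simpa only [pow_one] using (key ν hν).trans (key 1 le_rfl).symm

lemma alphaF_prime_pow (hp : p.Prime) {ν : ℕ} (hν : 1 ≤ ν) :
    alphaF M (p ^ ν) = 1 - chi M p / (p : ℝ) ^ 2 := by
  rw [alphaF, sum_divisors_prime_pow_of_eq_zero hp hν _
    (fun i hi ↦ by simp only [moebius_prime_pow_eq_zero hp hi, mul_zero, zero_div]),
    moebius_apply_one, moebius_apply_prime hp, chi_one]
  push_cast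
  ring

lemma sfPart_one : sfPart 1 = 1 := by simp [sfPart]

lemma ffPart_one : ffPart 1 = 1 := by simp [ffPart]

lemma sfPart_prime (hp : p.Prime) : sfPart p = p := by
  simp [sfPart, hp.primeFactors, hp.factorization_self]

lemma ffPart_prime (hp : p.Prime) : ffPart p = 1 := by
  simp [ffPart, hp.primeFactors, hp.factorization_self]

lemma sfPart_prime_pow (hp : p.Prime) {ν : ℕ} (hν : 2 ≤ ν) : sfPart (p ^ ν) = 1 := by
  simp [sfPart, Nat.primeFactors_prime_pow (k := ν) (by omega) hp, hp.factorization_pow]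
  omega

lemma ffPart_prime_pow (hp : p.Prime) {ν : ℕ} (hν : 2 ≤ ν) : ffPart (p ^ ν) = p ^ ν := by
  simp [ffPart, Nat.primeFactors_prime_pow (k := ν) (by omega) hp, hp.factorization_pow]
  omega

variable {M lam}

lemma rF_one (h1 : lam 1 = 1) : rF M lam 1 = 1 := by
  simp [rF, sigTw_one, h1]

lemma xi'_one_one (h1 : lam 1 = 1) : xi' M lam 1 1 = 1 := by
  simp [xi', rF_one h1, betaF_one, h1]

lemma xi''_one_one (h1 : lam 1 = 1) : xi'' M lam 1 1 = 1 := by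
  simp [xi'', rF_one h1, alphaF_one, muLam_one]

lemma xi'_self (h1 : lam 1 = 1) {d : ℕ} (hd : 0 < d) :
    xi' M lam d d = (Real.sqrt (rF M lam d))⁻¹ := by
  simp [xi', Nat.div_self hd, betaF_one, h1]

lemma xi_one_one (h1 : lam 1 = 1) : xi M lam 1 1 = 1 := by
  rw [xi, sfPart_one, ffPart_one, Nat.gcd_one_left, xi'_one_one h1, xi''_one_one h1, mul_one]

lemma xi_prime (h1 : lam 1 = 1) (hp : p.Prime) (ℓ : ℕ) :
    xi M lam p ℓ = xi' M lam p (p.gcd ℓ) := by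
  rw [xi, sfPart_prime hp, ffPart_prime hp, Nat.gcd_one_left, xi''_one_one h1, mul_one]

lemma xi_prime_pow (h1 : lam 1 = 1) (hp : p.Prime) {ν k : ℕ} (hν : 2 ≤ ν) (hk : k ≤ ν) :
    xi M lam (p ^ ν) (p ^ k) = muLam M lam (p ^ (ν - k)) /
      (Real.sqrt ((p : ℝ) ^ (ν - k)) * Real.sqrt (rF M lam p * (1 - chi M p / (p : ℝ) ^ 2))) := by
  rw [xi, sfPart_prime_pow hp hν, ffPart_prime_pow hp hν, Nat.gcd_one_left, xi'_one_one h1,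
    one_mul, xi'', Nat.gcd_eq_right (pow_dvd_pow p hk), Nat.pow_div hk hp.pos,
    rF_prime_pow M lam hp (by omega), alphaF_prime_pow M hp (by omega), Nat.cast_pow]

end PrimePowerValues

theorem xi_prime_power_values_general (M : ℕ) (p : ℕ) (hp : p.Prime)
    (lam : ℕ → ℝ) (hmult : IsMult lam) :
    xi M lam 1 1 = 1 ∧
    xi M lam p p = (Real.sqrt (rF M lam p))⁻¹ ∧
    xi M lam p 1 = (-lam p / (Real.sqrt p * (1 + chi M p / p))) * xi M lam p p ∧
    ∀ ν : ℕ, 2 ≤ ν →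
      xi M lam (p ^ ν) (p ^ ν) =
          (Real.sqrt (rF M lam p * (1 - chi M p / (p : ℝ) ^ 2)))⁻¹ ∧
      xi M lam (p ^ ν) (p ^ (ν - 1)) =
          (-lam p / Real.sqrt p) * xi M lam (p ^ ν) (p ^ ν) ∧
      xi M lam (p ^ ν) (p ^ (ν - 2)) =
          (chi M p / p) * xi M lam (p ^ ν) (p ^ ν) := by
  have h1 := hmult.1
  have hpp : xi M lam p p = (Real.sqrt (rF M lam p))⁻¹ := by
    rw [xi_prime h1 hp, Nat.gcd_self, xi'_self h1 hp.pos]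
  refine ⟨xi_one_one h1, hpp, ?_, fun ν hν ↦ ?_⟩
  · rw [hpp, xi_prime h1 hp, Nat.gcd_one_right, xi', Nat.div_one, moebius_apply_prime hp,
      betaF_prime M hp]
    push_cast
    field_simp
  have htop : xi M lam (p ^ ν) (p ^ ν) =
      (Real.sqrt (rF M lam p * (1 - chi M p / (p : ℝ) ^ 2)))⁻¹ := by
    rw [xi_prime_pow h1 hp hν le_rfl, Nat.sub_self, pow_zero, muLam_one]
    simp
  refine ⟨htop, ?_, ?_⟩
  · rw [xi_prime_pow h1 hp hν (by omega), (by omega : ν - (ν - 1) = 1), pow_one,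
      muLam_prime M lam hp, htop]
    field_simp
  · rw [xi_prime_pow h1 hp hν (by omega), (by omega : ν - (ν - 2) = 2), muLam_prime_sq M lam hp,
      htop, Real.sqrt_sq (Nat.cast_nonneg p)]
    field_simp

/-- Explicit values of `ξ` at prime powers: if `p` is prime,
`λ` is multiplicative and `r(p) > 0`, then `ξ_1(1) = 1`, `ξ_p(p) = r(p)^{-1/2}`,
`ξ_p(1) = (-λ(p)/(√p(1 + χ(p)/p))) ξ_p(p)`, and for all `ν ≥ 2`:
`ξ_{p^ν}(p^ν) = (r(p)(1 - χ(p)/p²))^{-1/2}`,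
`ξ_{p^ν}(p^{ν-1}) = (-λ(p)/√p) ξ_{p^ν}(p^ν)`, and
`ξ_{p^ν}(p^{ν-2}) = (χ(p)/p) ξ_{p^ν}(p^ν)`. -/
theorem xi_prime_power_values (M : ℕ) (hM : 0 < M) (p : ℕ) (hp : p.Prime)
    (lam : ℕ → ℝ) (hmult : IsMult lam) (hr : 0 < rF M lam p) :
    xi M lam 1 1 = 1 ∧
    xi M lam p p = (Real.sqrt (rF M lam p))⁻¹ ∧
    xi M lam p 1 = (-lam p / (Real.sqrt p * (1 + chi M p / p))) * xi M lam p p ∧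
    ∀ ν : ℕ, 2 ≤ ν →
      xi M lam (p ^ ν) (p ^ ν) =
          (Real.sqrt (rF M lam p * (1 - chi M p / (p : ℝ) ^ 2)))⁻¹ ∧
      xi M lam (p ^ ν) (p ^ (ν - 1)) =
          (-lam p / Real.sqrt p) * xi M lam (p ^ ν) (p ^ ν) ∧
      xi M lam (p ^ ν) (p ^ (ν - 2)) =
          (chi M p / p) * xi M lam (p ^ ν) (p ^ ν) :=
  xi_prime_power_values_general M p hp lam hmult

end
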